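/- arXiv:1701.00016 — 4 statements merged into one kernel-verified Lean document; each statement's English description precedes it below -/
import Mathlib

section
/- If A is an n×n diagonal matrix with strictly positive diagonal entries, and W, H are n×n matrices with non-negative entries such that A = W·H, then W is a monomial matrix (i.e., W has exactly one nonzero entry in each row and each column). -/
theorem stmt_0 (n : ℕ) (A W H : Matrix (Fin n) (Fin n) ℝ)
    (hAdiag : A.IsDiag) (hApos : ∀ i, 0 < A i i)
    (hW : ∀ i j, 0 ≤ W i j) (hH : ∀ i j, 0 ≤ H i j)
    (hmul : A = W * H) :
    (∀ i, ∃! j, W i j ≠ 0) ∧ (∀ j, ∃! i, W i j ≠ 0) := by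
  set V : Matrix (Fin n) (Fin n) ℝ := H * Matrix.diagonal (fun i => (A i i)⁻¹) with hVdef
  have hVnn : ∀ i j, 0 ≤ V i j := by
    intro i j
    rw [hVdef, Matrix.mul_diagonal]
    exact mul_nonneg (hH i j) (inv_nonneg.mpr (hApos j).le)
  have hWV : W * V = 1 := by
    rw [hVdef, ← Matrix.mul_assoc, ← hmul]
    nth_rewrite 1 [← hAdiag.diagonal_diag]
    rw [Matrix.diagonal_mul_diagonal]
    convert Matrix.diagonal_one using 2
    funext i
    exact mul_inv_cancel₀ (hApos i).ne'
  have hVW : V * W = 1 := mul_eq_one_comm.mp hWV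
  -- if W i j ≠ 0 then row j of V is supported on column i
  have key1 : ∀ i j k, W i j ≠ 0 → k ≠ i → V j k = 0 := by
    intro i j k hij hki
    have h0 : (W * V) i k = 0 := by rw [hWV]; exact Matrix.one_apply_ne (Ne.symm hki)
    rw [Matrix.mul_apply] at h0
    have := (Finset.sum_eq_zero_iff_of_nonneg
      (fun m _ => mul_nonneg (hW i m) (hVnn m k))).mp h0 j (Finset.mem_univ j)
    exact (mul_eq_zero.mp this).resolve_left hij
  -- if W i j ≠ 0 then column i of V is supported on row j
  have key2 : ∀ i j k, W i j ≠ 0 → k ≠ j → V k i = 0 := by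
    intro i j k hij hkj
    have h0 : (V * W) k j = 0 := by rw [hVW]; exact Matrix.one_apply_ne hkj
    rw [Matrix.mul_apply] at h0
    have := (Finset.sum_eq_zero_iff_of_nonneg
      (fun m _ => mul_nonneg (hVnn k m) (hW m j))).mp h0 i (Finset.mem_univ i)
    exact (mul_eq_zero.mp this).resolve_right hij
  have hred1 : ∀ i j j'', W i j ≠ 0 → (V * W) j j'' = V j i * W i j'' := by
    intro i j j'' hij
    rw [Matrix.mul_apply]
    exact Finset.sum_eq_single i (fun m _ hm => by rw [key1 i j m hij hm, zero_mul])
      (fun h => absurd (Finset.mem_univ i) h)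
  have hred2 : ∀ i j i'', W i j ≠ 0 → (W * V) i'' i = W i'' j * V j i := by
    intro i j i'' hij
    rw [Matrix.mul_apply]
    exact Finset.sum_eq_single j (fun m _ hm => by rw [key2 i j m hij hm, mul_zero])
      (fun h => absurd (Finset.mem_univ j) h)
  constructor
  · intro i
    have h1 : (W * V) i i = 1 := by rw [hWV, Matrix.one_apply_eq]
    rw [Matrix.mul_apply] at h1
    have hex : ∃ j, W i j ≠ 0 := by
      by_contra h
      push_neg at h
      simp only [h, zero_mul, Finset.sum_const_zero] at h1
      exact one_ne_zero h1.symm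
    obtain ⟨j, hj⟩ := hex
    refine ⟨j, hj, ?_⟩
    intro j' hj'
    by_contra hne
    have e1 : V j' i * W i j' = 1 := by
      rw [← hred1 i j' j' hj', hVW, Matrix.one_apply_eq]
    have e2 : V j' i * W i j = 0 := by
      rw [← hred1 i j' j hj', hVW, Matrix.one_apply_ne hne]
    have hV' : V j' i ≠ 0 := left_ne_zero_of_mul_eq_one e1
    exact hj ((mul_eq_zero.mp e2).resolve_left hV')
  · intro j
    have h1 : (V * W) j j = 1 := by rw [hVW, Matrix.one_apply_eq]
    rw [Matrix.mul_apply] at h1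
    have hex : ∃ i, W i j ≠ 0 := by
      by_contra h
      push_neg at h
      simp only [h, mul_zero, Finset.sum_const_zero] at h1
      exact one_ne_zero h1.symm
    obtain ⟨i, hi⟩ := hex
    refine ⟨i, hi, ?_⟩
    intro i' hi'
    by_contra hne
    have e1 : W i' j * V j i' = 1 := by
      rw [← hred2 i' j i' hi', hWV, Matrix.one_apply_eq]
    have e2 : W i' j * V j i = 0 := by
      rw [← hred2 i j i' hi, hWV, Matrix.one_apply_ne hne]
    have hV' : V j i ≠ 0 := by
      have e3 : W i j * V j i = 1 := by
        rw [← hred2 i j i hi, hWV, Matrix.one_apply_eq]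
      exact right_ne_zero_of_mul_eq_one e3
    exact hi' ((mul_eq_zero.mp e2).resolve_right hV')
end

section
/- If A is an n×n diagonal matrix with strictly positive diagonal entries, and W, H are n×n non-negative matrices with A = W·H, then H is a monomial matrix. -/
theorem stmt_1 (n : ℕ) (A W H : Matrix (Fin n) (Fin n) ℝ)
    (hAdiag : A.IsDiag) (hApos : ∀ i, 0 < A i i)
    (hW : ∀ i j, 0 ≤ W i j) (hH : ∀ i j, 0 ≤ H i j)
    (hmul : A = W * H) :
    (∀ i, ∃! j, H i j ≠ 0) ∧ (∀ j, ∃! i, H i j ≠ 0) := by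
  classical
  set K : Matrix (Fin n) (Fin n) ℝ :=
    Matrix.diagonal (fun i => (A i i)⁻¹) * W with hKdef
  have hKnn : ∀ i j, 0 ≤ K i j := by
    intro i j
    rw [hKdef, Matrix.diagonal_mul]
    exact mul_nonneg (inv_nonneg.mpr (hApos i).le) (hW i j)
  have hKH : K * H = 1 := by
    have hdA : Matrix.diagonal (fun i => (A i i)⁻¹) * A = 1 := by
      ext i j
      rw [Matrix.diagonal_mul]
      by_cases h : i = j
      · subst h; simp [Matrix.one_apply_eq, inv_mul_cancel₀ (hApos i).ne']
      · rw [hAdiag h, mul_zero, Matrix.one_apply_ne h]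
    rw [hKdef, mul_assoc, ← hmul, hdA]
  have hHK : H * K = 1 := mul_eq_one_comm.mp hKH
  -- Key lemma 1: H i j ≠ 0 → i' ≠ i → K j i' = 0
  have key1 : ∀ i j i', H i j ≠ 0 → i' ≠ i → K j i' = 0 := by
    intro i j i' hij hne
    have h0 : (H * K) i i' = 0 := by
      rw [hHK, Matrix.one_apply_ne (Ne.symm hne)]
    rw [Matrix.mul_apply] at h0
    have := (Finset.sum_eq_zero_iff_of_nonneg
      (fun k _ => mul_nonneg (hH i k) (hKnn k i'))).mp h0 j (Finset.mem_univ j)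
    rcases mul_eq_zero.mp this with h | h
    · exact absurd h hij
    · exact h
  -- Key lemma 2: H i j ≠ 0 → K j i ≠ 0
  have key2 : ∀ i j, H i j ≠ 0 → K j i ≠ 0 := by
    intro i j hij hKji
    have h1 : (K * H) j j = 1 := by rw [hKH, Matrix.one_apply_eq]
    rw [Matrix.mul_apply] at h1
    have : ∑ k, K j k * H k j = 0 := by
      apply Finset.sum_eq_zero
      intro k _
      by_cases hk : k = i
      · rw [hk, hKji, zero_mul]
      · rw [key1 i j k hij hk, zero_mul]
    rw [this] at h1
    exact zero_ne_one h1
  constructor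
  · intro i
    have h1 : (H * K) i i = 1 := by rw [hHK, Matrix.one_apply_eq]
    rw [Matrix.mul_apply] at h1
    have hex : ∃ j, H i j * K j i ≠ 0 := by
      by_contra hc
      push_neg at hc
      rw [Finset.sum_eq_zero (fun k _ => hc k)] at h1
      exact zero_ne_one h1
    obtain ⟨j, hj⟩ := hex
    have hij : H i j ≠ 0 := fun h => hj (by rw [h, zero_mul])
    refine ⟨j, hij, fun j' hij' => ?_⟩
    by_contra hne
    have hKji : K j i ≠ 0 := key2 i j hij
    have h0 : (K * H) j j' = 0 := by rw [hKH, Matrix.one_apply_ne (Ne.symm hne)]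
    rw [Matrix.mul_apply] at h0
    have := (Finset.sum_eq_zero_iff_of_nonneg
      (fun k _ => mul_nonneg (hKnn j k) (hH k j'))).mp h0 i (Finset.mem_univ i)
    rcases mul_eq_zero.mp this with h | h
    · exact hKji h
    · exact hij' h
  · intro j
    have h1 : (K * H) j j = 1 := by rw [hKH, Matrix.one_apply_eq]
    rw [Matrix.mul_apply] at h1
    have hex : ∃ i, K j i * H i j ≠ 0 := by
      by_contra hc
      push_neg at hc
      rw [Finset.sum_eq_zero (fun k _ => hc k)] at h1
      exact zero_ne_one h1
    obtain ⟨i, hi⟩ := hex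
    have hij : H i j ≠ 0 := fun h => hi (by rw [h, mul_zero])
    refine ⟨i, hij, fun i' hi'j => ?_⟩
    by_contra hne
    exact key2 i' j hi'j (key1 i j i' hij (by simpa using hne))
end

section
/- If A is an n×n diagonal matrix with strictly positive diagonal entries and A = W·H with W, H non-negative n×n matrices, then there exists a permutation matrix P such that W·P and P⁻¹·H are both diagonal matrices with strictly positive diagonal entries, and for each i, (W·P)(i,i)·(P⁻¹·H)(i,i) = A(i,i). -/
/-!
Since `W` and `H` are non-negative, every off-diagonal entry `∑ₖ W i k * H k j = 0` of `A`
forces each summand `W i k * H k j` to vanish, while `A i i ≠ 0` provides some `k i` with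
`W i (k i) ≠ 0 ≠ H (k i) i`. Two rows sharing such a `k` would produce a non-zero off-diagonal
summand, so `k` is a permutation; reindexing the columns of `W` and the rows of `H` by it makes
both factors diagonal.
-/

open Matrix

namespace Matrix

variable {ι R : Type*} [Fintype ι]

lemma inv_permMatrix [DecidableEq ι] [CommRing R] (σ : Equiv.Perm ι) :
    (σ.permMatrix R)⁻¹ = σ⁻¹.permMatrix R :=
  inv_eq_left_inv (by rw [← permMatrix_mul, mul_inv_cancel, permMatrix_one])

lemma IsDiag.mul_apply_self [NonUnitalNonAssocSemiring R] {A B : Matrix ι ι R} (hA : A.IsDiag)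
    (i : ι) : (A * B) i i = A i i * B i i := by
  classical
  simpa [diagonal_mul] using (congrArg (fun M => (M * B) i i) hA.diagonal_diag).symm

lemma exists_ne_zero_of_mul_apply_ne_zero [NonUnitalNonAssocSemiring R] {W H : Matrix ι ι R}
    {i j : ι} (h : (W * H) i j ≠ 0) : ∃ k, W i k ≠ 0 ∧ H k j ≠ 0 := by
  obtain ⟨k, -, hk⟩ := Finset.exists_ne_zero_of_sum_ne_zero h
  exact ⟨k, left_ne_zero_of_mul hk, right_ne_zero_of_mul hk⟩

section Nonneg

variable [Semiring R] [PartialOrder R] [IsOrderedRing R] {W H : Matrix ι ι R}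

lemma mul_apply_eq_zero_iff_of_nonneg (hW : ∀ i k, 0 ≤ W i k) (hH : ∀ k j, 0 ≤ H k j)
    {i j : ι} : (W * H) i j = 0 ↔ ∀ k, W i k * H k j = 0 := by
  simp [mul_apply, Finset.sum_eq_zero_iff_of_nonneg fun k _ => mul_nonneg (hW i k) (hH k j)]

theorem exists_equiv_isDiag_submatrix_of_isDiag_mul [NoZeroDivisors R]
    (hW : ∀ i k, 0 ≤ W i k) (hH : ∀ k j, 0 ≤ H k j) (hdiag : (W * H).IsDiag)
    (hne : ∀ i, (W * H) i i ≠ 0) :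
    ∃ e : Equiv.Perm ι, (W.submatrix id e).IsDiag ∧ (H.submatrix e id).IsDiag ∧
      ∀ i, W i (e i) ≠ 0 ∧ H (e i) i ≠ 0 := by
  have hzero : ∀ i j, i ≠ j → ∀ k, W i k * H k j = 0 := fun i j hij =>
    (mul_apply_eq_zero_iff_of_nonneg hW hH).1 (hdiag hij)
  choose k hWk hHk using fun i => exists_ne_zero_of_mul_apply_ne_zero (hne i)
  have hk : Function.Injective k := by
    intro i j hij
    by_contra hne
    have hHij : H (k i) j ≠ 0 := by rw [hij]; exact hHk j
    exact mul_ne_zero (hWk i) hHij (hzero i j hne (k i))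
  refine ⟨Equiv.ofBijective k hk.bijective_of_finite, fun i j hij => ?_, fun i j hij => ?_,
    fun i => ⟨hWk i, hHk i⟩⟩
  · exact (mul_eq_zero.1 (hzero i j hij (k j))).resolve_right (hHk j)
  · exact (mul_eq_zero.1 (hzero i j hij (k i))).resolve_left (hWk i)

end Nonneg

end Matrix

theorem stmt_2 (n : ℕ) (A W H : Matrix (Fin n) (Fin n) ℝ)
    (hAdiag : A.IsDiag) (hApos : ∀ i, 0 < A i i)
    (hW : ∀ i j, 0 ≤ W i j) (hH : ∀ i j, 0 ≤ H i j)
    (hmul : A = W * H) :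
    ∃ σ : Equiv.Perm (Fin n),
      (W * σ.permMatrix ℝ).IsDiag ∧ ((σ.permMatrix ℝ)⁻¹ * H).IsDiag ∧
      (∀ i, 0 < (W * σ.permMatrix ℝ) i i) ∧
      (∀ i, 0 < ((σ.permMatrix ℝ)⁻¹ * H) i i) ∧
      (∀ i, (W * σ.permMatrix ℝ) i i * ((σ.permMatrix ℝ)⁻¹ * H) i i = A i i) := by
  subst hmul
  obtain ⟨e, hWe, hHe, hne⟩ :=
    exists_equiv_isDiag_submatrix_of_isDiag_mul hW hH hAdiag fun i => (hApos i).ne'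
  have hWP : W * e⁻¹.permMatrix ℝ = W.submatrix id e := PEquiv.mul_toMatrix_toPEquiv W e⁻¹
  have hPH : (e⁻¹.permMatrix ℝ)⁻¹ * H = H.submatrix e id := by
    rw [inv_permMatrix, inv_inv]
    exact PEquiv.toMatrix_toPEquiv_mul e H
  refine ⟨e⁻¹, ?_⟩
  rw [hWP, hPH]
  refine ⟨hWe, hHe, fun i => (hW i (e i)).lt_of_ne' (hne i).1,
    fun i => (hH (e i) i).lt_of_ne' (hne i).2, fun i => ?_⟩
  rw [← hWe.mul_apply_self, submatrix_mul_equiv]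
  rfl
end

section
/- Let ε > 0 and let A be the 2×2 matrix with A(1,1) = A(2,2) = 1, A(1,2) = ε, A(2,1) = 0. Suppose W and H are 2×2 non-negative matrices with W·H = A. Then, writing W = [[m, n],[p, q]] and H = [[r, s],[t, u]], either (p = 0 and t = 0) or (q = 0 and r = 0). -/
theorem stmt_3 (ε m n p q r s t u : ℝ) (hε : 0 < ε)
    (hW : ∀ i j, 0 ≤ !![m, n; p, q] i j) (hH : ∀ i j, 0 ≤ !![r, s; t, u] i j)
    (hmul : !![m, n; p, q] * !![r, s; t, u] = !![1, ε; 0, 1]) :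
    (p = 0 ∧ t = 0) ∨ (q = 0 ∧ r = 0) := by
  have h11 := congrFun (congrFun hmul 0) 0
  have h21 := congrFun (congrFun hmul 1) 0
  have h22 := congrFun (congrFun hmul 1) 1
  simp [Matrix.mul_apply, Fin.sum_univ_two] at h11 h21 h22
  have hp := hW 1 0
  have hq := hW 1 1
  have hr := hH 0 0
  have ht := hH 1 0
  have hs := hH 0 1
  have hu := hH 1 1
  simp at hp hq hr ht hs hu
  have hpr : p * r = 0 ∧ q * t = 0 := by
    constructor <;> nlinarith [mul_nonneg hp hr, mul_nonneg hq ht]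
  rcases mul_eq_zero.1 hpr.1 with hp0 | hr0 <;>
    rcases mul_eq_zero.1 hpr.2 with hq0 | ht0
  · exact absurd h22 (by subst hp0 hq0; simp)
  · exact Or.inl ⟨hp0, ht0⟩
  · exact Or.inr ⟨hq0, hr0⟩
  · exact absurd h11 (by subst hr0 ht0; simp)
end
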